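/- For unit ℓ₂-norm vectors u, v ∈ ℝⁿ, the spectral norm of the difference of their outer products satisfies ‖u uᵀ − v vᵀ‖₂ = sin θ, where θ is the angle between u and v (i.e., cos θ = |⟨u, v⟩|). -/

import Mathlib

open scoped BigOperators

/-- Euclidean (ℓ₂) norm of a finitely-indexed real vector. -/
noncomputable def euclNorm {ι : Type*} [Fintype ι] (v : ι → ℝ) : ℝ :=
  Real.sqrt (∑ i, v i ^ 2)

/-- Euclidean inner product of two real vectors. -/
def ip {ι : Type*} [Fintype ι] (u v : ι → ℝ) : ℝ := ∑ i, u i * v i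

/-- Spectral (ℓ₂ operator) norm of a real matrix: supremum of ‖A x‖ over unit vectors x. -/
noncomputable def specNorm {m n : Type*} [Fintype m] [Fintype n] (A : Matrix m n ℝ) : ℝ :=
  sSup ((fun x : n → ℝ => euclNorm (A.mulVec x)) '' {x | euclNorm x = 1})

/-- Frobenius norm of a real matrix. -/
noncomputable def frobNorm {m n : Type*} [Fintype m] [Fintype n] (A : Matrix m n ℝ) : ℝ :=
  Real.sqrt (∑ i, ∑ j, A i j ^ 2)

/-- Smallest singular value of a real matrix: infimum of ‖A x‖ over unit vectors x. -/
noncomputable def smin {m n : Type*} [Fintype m] [Fintype n] (A : Matrix m n ℝ) : ℝ :=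
  sInf ((fun x : n → ℝ => euclNorm (A.mulVec x)) '' {x | euclNorm x = 1})

/-- Rank-one outer product u vᵀ. -/
def outer {ι : Type*} (u v : ι → ℝ) : Matrix ι ι ℝ := Matrix.of fun i j => u i * v j

/-- Column submatrix given by a finite index set. -/
def colSub {m n : Type*} (A : Matrix m n ℝ) (s : Finset n) : Matrix m s ℝ :=
  Matrix.of fun i j => A i j

/-!
On a unit vector `x`, `(u uᵀ - v vᵀ) x = ⟨u, x⟩ u - ⟨v, x⟩ v`, whose squared norm is
`a² + b² - 2abc` with `a = ⟨u, x⟩`, `b = ⟨v, x⟩`, `c = ⟨u, v⟩`. This equals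
`(a - bc)² + b²(1 - c²)`, and Cauchy–Schwarz for the components `u - c v` and `x - b v`
orthogonal to `v` gives `(a - bc)² ≤ (1 - c²)(1 - b²)`, so the squared norm is at most
`1 - c² = sin² θ`; the value is attained at `x = u`.
-/

open RealInnerProductSpace

section InnerProductSpace

variable {E : Type*} [NormedAddCommGroup E] [InnerProductSpace ℝ E]

lemma norm_inner_smul_sub_inner_smul_sq {u v : E} (hu : ‖u‖ = 1) (hv : ‖v‖ = 1) (x : E) :
    ‖⟪u, x⟫ • u - ⟪v, x⟫ • v‖ ^ 2 = ⟪u, x⟫ ^ 2 + ⟪v, x⟫ ^ 2 - 2 * ⟪u, x⟫ * ⟪v, x⟫ * ⟪u, v⟫ := by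
  rw [← real_inner_self_eq_norm_sq]
  simp only [inner_sub_left, inner_sub_right, real_inner_smul_left, real_inner_smul_right,
    real_inner_self_eq_norm_sq, norm_smul, Real.norm_eq_abs, mul_pow, sq_abs, hu, hv,
    real_inner_comm u v]
  ring

lemma inner_sub_inner_mul_inner_sq_le {u v x : E} (hu : ‖u‖ = 1) (hv : ‖v‖ = 1) (hx : ‖x‖ = 1) :
    (⟪u, x⟫ - ⟪v, x⟫ * ⟪u, v⟫) ^ 2 ≤ (1 - ⟪u, v⟫ ^ 2) * (1 - ⟪v, x⟫ ^ 2) := by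
  have h := real_inner_mul_inner_self_le (u - ⟪u, v⟫ • v) (x - ⟪v, x⟫ • v)
  simp only [inner_sub_left, inner_sub_right, real_inner_smul_left, real_inner_smul_right,
    real_inner_self_eq_norm_sq, norm_smul, Real.norm_eq_abs, mul_pow, sq_abs, hu, hv, hx,
    real_inner_comm u v, real_inner_comm v x] at h
  linarith

lemma norm_inner_smul_sub_inner_smul_sq_le {u v x : E} (hu : ‖u‖ = 1) (hv : ‖v‖ = 1)
    (hx : ‖x‖ = 1) : ‖⟪u, x⟫ • u - ⟪v, x⟫ • v‖ ^ 2 ≤ 1 - ⟪u, v⟫ ^ 2 := by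
  rw [norm_inner_smul_sub_inner_smul_sq hu hv]
  nlinarith [inner_sub_inner_mul_inner_sq_le hu hv hx, sq_nonneg ⟪v, x⟫]

lemma norm_inner_smul_sub_inner_smul_self_sq {u v : E} (hu : ‖u‖ = 1) (hv : ‖v‖ = 1) :
    ‖⟪u, u⟫ • u - ⟪v, u⟫ • v‖ ^ 2 = 1 - ⟪u, v⟫ ^ 2 := by
  rw [norm_inner_smul_sub_inner_smul_sq hu hv, real_inner_self_eq_norm_sq, hu, real_inner_comm]
  ring

theorem isGreatest_norm_inner_smul_sub_inner_smul {u v : E} (hu : ‖u‖ = 1) (hv : ‖v‖ = 1) :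
    IsGreatest ((fun x => ‖⟪u, x⟫ • u - ⟪v, x⟫ • v‖) '' Metric.sphere 0 1) √(1 - ⟪u, v⟫ ^ 2) := by
  refine ⟨⟨u, by simpa using hu, ?_⟩, ?_⟩
  · rw [← norm_inner_smul_sub_inner_smul_self_sq hu hv, Real.sqrt_sq (norm_nonneg _)]
  · rintro _ ⟨x, hx, rfl⟩
    exact Real.le_sqrt_of_sq_le (norm_inner_smul_sub_inner_smul_sq_le hu hv (by simpa using hx))

end InnerProductSpace

section Euclidean

variable {ι : Type*} [Fintype ι]

lemma euclNorm_eq_norm (x : ι → ℝ) : euclNorm x = ‖WithLp.toLp 2 x‖ := by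
  simp [euclNorm, EuclideanSpace.norm_eq]

lemma ip_eq_inner (u v : ι → ℝ) : ip u v = ⟪WithLp.toLp 2 u, WithLp.toLp 2 v⟫ := by
  simp [ip, EuclideanSpace.inner_toLp_toLp, dotProduct, mul_comm]

lemma outer_sub_outer_mulVec (u v x : ι → ℝ) :
    (outer u u - outer v v).mulVec x = ip u x • u - ip v x • v := by
  rw [Matrix.sub_mulVec]
  ext i
  simp only [Pi.sub_apply, Pi.smul_apply, smul_eq_mul, Matrix.mulVec, dotProduct,
    outer, Matrix.of_apply, ip, Finset.sum_mul]
  congr 1 <;> exact Finset.sum_congr rfl fun j _ => by ring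

lemma image_euclNorm_outer_sub_outer_mulVec (u v : ι → ℝ) :
    (fun x => euclNorm ((outer u u - outer v v).mulVec x)) '' {x | euclNorm x = 1} =
      (fun y => ‖⟪WithLp.toLp 2 u, y⟫ • WithLp.toLp 2 u - ⟪WithLp.toLp 2 v, y⟫ • WithLp.toLp 2 v‖)
        '' Metric.sphere 0 1 := by
  rw [← Set.image_preimage_eq (Metric.sphere 0 1) (WithLp.toLp_surjective 2), Set.image_image]
  congr 1
  · funext x
    simp [euclNorm_eq_norm, outer_sub_outer_mulVec, ip_eq_inner]
  · ext x
    simp [euclNorm_eq_norm]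

end Euclidean

/-- For unit vectors u, v, ‖uuᵀ − vvᵀ‖₂ = sin θ, where
θ = arccos |⟨u,v⟩| is the angle between u and v. -/
theorem stmt_1 {n : ℕ} (u v : Fin n → ℝ) (θ : ℝ)
    (hu : euclNorm u = 1) (hv : euclNorm v = 1)
    (hθ : θ = Real.arccos |ip u v|) :
    specNorm (outer u u - outer v v) = Real.sin θ := by
  rw [euclNorm_eq_norm] at hu hv
  rw [hθ, Real.sin_arccos, sq_abs, specNorm, image_euclNorm_outer_sub_outer_mulVec, ip_eq_inner]
  exact (isGreatest_norm_inner_smul_sub_inner_smul hu hv).csSup_eq
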